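/- arXiv:1105.3461 — 4 statements merged into one kernel-verified Lean document; each statement's English description precedes it below -/
import Mathlib

section
/- For every angle α with 0 < α ≤ π, the function r ↦ arcosh(cosh(r)² − sinh(r)²·cos α) − 2r tends to log((1 − cos α)/2) as r → ∞. (This is the core computation of Lemma A.3: in a 2/3-ideal hyperbolic triangle with material-vertex angle α, the side opposite the material vertex has length ℓ(g) = ℓ(ρ) + ℓ(ρ′) + log((1 − cos α)/2) relative to any horoball neighborhoods of the two ideal vertices.) -/
/-- The inverse hyperbolic cosine: `arcosh x = log (x + √(x² − 1))`. -/
noncomputable def Real.arcoshLog (x : ℝ) : ℝ := Real.log (x + Real.sqrt (x ^ 2 - 1))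

/-!
With `c = 1 - cos α > 0` the argument of `arcosh` is `1 + c sinh² r ~ (c / 4) e^{2r}`, and
`arcosh x = log (2x) + o(1)` as `x → ∞`; hence `arcosh(…) - 2r → log (2 · c / 4) = log (c / 2)`.
-/

open Filter Topology

namespace Real

lemma arcoshLog_eq_arcosh : arcoshLog = arcosh := rfl

lemma tendsto_arcosh_sub_log_two_mul :
    Tendsto (fun x => arcosh x - log (2 * x)) atTop (𝓝 0) := by
  have hcont : ContinuousAt (fun t : ℝ => log ((1 + √(1 - t ^ 2)) / 2)) 0 :=
    ContinuousAt.log (by fun_prop) (by norm_num)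
  have hlim := hcont.tendsto.comp tendsto_inv_atTop_zero
  rw [show log ((1 + √(1 - (0 : ℝ) ^ 2)) / 2) = 0 by norm_num] at hlim
  refine hlim.congr' ?_
  filter_upwards [eventually_ge_atTop 1] with x hx
  have hx0 : 0 < x := by linarith
  have hsqrt : √(x ^ 2 - 1) = x * √(1 - x⁻¹ ^ 2) := by
    have : x ^ 2 - 1 = x ^ 2 * (1 - x⁻¹ ^ 2) := by field_simp
    rw [this, sqrt_mul (sq_nonneg x), sqrt_sq hx0.le]
  rw [Function.comp_apply, arcosh, ← log_div (by positivity) (by positivity), hsqrt]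
  congr 1
  field_simp

lemma tendsto_arcosh_sub_two_mul {g : ℝ → ℝ} {L : ℝ} (hL : 0 < L)
    (hg : Tendsto (fun r => g r * exp (-(2 * r))) atTop (𝓝 L)) :
    Tendsto (fun r => arcosh (g r) - 2 * r) atTop (𝓝 (log (2 * L))) := by
  have hexp : Tendsto (fun r => exp (2 * r)) atTop atTop :=
    tendsto_exp_atTop.comp (tendsto_id.const_mul_atTop two_pos)
  have hg_atTop : Tendsto g atTop atTop := by
    refine (hg.pos_mul_atTop hL hexp).congr fun r => ?_
    rw [mul_assoc, ← exp_add, neg_add_cancel, exp_zero, mul_one]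
  have hlog : Tendsto (fun r => log (2 * (g r * exp (-(2 * r))))) atTop (𝓝 (log (2 * L))) :=
    (hg.const_mul 2).log (by positivity)
  have hsum := (tendsto_arcosh_sub_log_two_mul.comp hg_atTop).add hlog
  rw [zero_add] at hsum
  refine hsum.congr' ?_
  filter_upwards [hg_atTop.eventually_gt_atTop 0] with r hr
  rw [Function.comp_apply, ← mul_assoc, log_mul (by positivity) (exp_pos _).ne', log_exp]
  ring

lemma sinh_mul_exp_neg (r : ℝ) : sinh r * exp (-r) = (1 - exp (-(2 * r))) / 2 := by
  have h : exp r * exp (-r) = 1 := by rw [← exp_add, add_neg_cancel, exp_zero]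
  rw [sinh_eq, show -(2 * r) = -r + -r by ring, exp_add]
  linear_combination h / 2

lemma tendsto_one_add_mul_sinh_sq_mul_exp (c : ℝ) :
    Tendsto (fun r => (1 + c * sinh r ^ 2) * exp (-(2 * r))) atTop (𝓝 (c / 4)) := by
  have hu : Tendsto (fun r : ℝ => exp (-(2 * r))) atTop (𝓝 0) :=
    tendsto_exp_atBot.comp (tendsto_neg_atTop_atBot.comp (tendsto_id.const_mul_atTop two_pos))
  have hcont : Continuous (fun u : ℝ => u + c * ((1 - u) / 2) ^ 2) := by fun_prop
  have hlim := (hcont.tendsto 0).comp hu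
  rw [show (0 : ℝ) + c * ((1 - 0) / 2) ^ 2 = c / 4 by ring] at hlim
  refine hlim.congr fun r => ?_
  rw [Function.comp_apply, ← sinh_mul_exp_neg, show -(2 * r) = -r + -r by ring, exp_add]
  ring

end Real

/-- Core computation of Lemma A.3: for `0 < α ≤ π`, the function
`r ↦ arcosh(cosh² r − sinh² r · cos α) − 2r` tends to `log((1 − cos α)/2)` as `r → ∞`. -/
theorem two_thirds_ideal_limit (α : ℝ) (h0 : 0 < α) (hπ : α ≤ Real.pi) :
    Filter.Tendsto
      (fun r : ℝ => Real.arcoshLog (Real.cosh r ^ 2 - Real.sinh r ^ 2 * Real.cos α) - 2 * r)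
      Filter.atTop (nhds (Real.log ((1 - Real.cos α) / 2))) := by
  have hcos : Real.cos α < 1 := by
    simpa using Real.cos_lt_cos_of_nonneg_of_le_pi le_rfl hπ h0
  have hlaw (r : ℝ) : Real.cosh r ^ 2 - Real.sinh r ^ 2 * Real.cos α
      = 1 + (1 - Real.cos α) * Real.sinh r ^ 2 := by
    rw [Real.cosh_sq]; ring
  have hlim := Real.tendsto_arcosh_sub_two_mul (by linarith : 0 < (1 - Real.cos α) / 4)
    (Real.tendsto_one_add_mul_sinh_sq_mul_exp (1 - Real.cos α))
  simp only [Real.arcoshLog_eq_arcosh, hlaw]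
  convert hlim using 3
  ring
end

section
/- Let φ = (1 + √5)/2, let a = 2.383 ∈ ℂ and b = 4.222 + 2.657·i ∈ ℂ. Then for every natural number n ≥ 5, 4.3·φⁿ < |f_n·a + f_{n+1}·b| < 4.7·φⁿ. (This is the estimate of Lemma 7.7 for the length ℓ(μ₀ⁿ) of the Fibonacci slope μ₀ⁿ = f_n α₀ + f_{n+1} β₀ on the maximal cusp about T₀.) -/
/-!
By Binet's formula, `√5 (fₙ a + fₙ₊₁ b) = φⁿ (a + φ b) - ψⁿ (a + ψ b)`, and `|ψⁿ| = φ⁻ⁿ`.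
Hence `√5 ‖fₙ a + fₙ₊₁ b‖` differs from `φⁿ ‖a + φ b‖` by at most `‖a + ψ b‖ φ⁻ⁿ`.
For the cusp translations `‖a + ψ b‖ ≈ 1.66 ≤ 2`, so once `φⁿ ≥ 10` (i.e. `n ≥ 5`) the error is
at most `0.02 φⁿ`, while `‖a + φ b‖ ≈ 10.168` lies well inside `(4.3 √5, 4.7 √5) ≈ (9.62, 10.51)`.
-/

open Real goldenRatio Complex

theorem abs_goldenConj_pow (n : ℕ) : |ψ ^ n| = (φ ^ n)⁻¹ := by
  rw [abs_pow, ← inv_pow, inv_goldenRatio, abs_of_neg goldenConj_neg]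

theorem fib_mul_add_fib_succ_mul (a b : ℂ) (n : ℕ) :
    (Nat.fib n : ℂ) * a + Nat.fib (n + 1) * b =
      ((φ : ℂ) ^ n * (a + φ * b) - (ψ : ℂ) ^ n * (a + ψ * b)) / (√5 : ℝ) := by
  have hs : ((√5 : ℝ) : ℂ) ≠ 0 := ofReal_ne_zero.2 (Real.sqrt_pos.2 (by norm_num)).ne'
  have binet (k : ℕ) : (Nat.fib k : ℂ) = ((φ : ℂ) ^ k - (ψ : ℂ) ^ k) / (√5 : ℝ) := by
    exact_mod_cast Real.coe_fib_eq k
  rw [binet, binet]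
  field_simp
  ring

theorem abs_sqrt_five_mul_norm_fib_mul_add_fib_succ_mul_sub_le (a b : ℂ) (n : ℕ) :
    |√5 * ‖(Nat.fib n : ℂ) * a + Nat.fib (n + 1) * b‖ - φ ^ n * ‖a + φ * b‖| ≤
      ‖a + ψ * b‖ / φ ^ n := by
  have hs : 0 < √5 := Real.sqrt_pos.2 (by norm_num)
  have hφ : ‖(φ : ℂ) ^ n * (a + φ * b)‖ = φ ^ n * ‖a + φ * b‖ := by
    rw [norm_mul, norm_pow, norm_real, norm_of_nonneg goldenRatio_pos.le]
  have hψ : ‖(ψ : ℂ) ^ n * (a + ψ * b)‖ = ‖a + ψ * b‖ / φ ^ n := by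
    rw [norm_mul, ← ofReal_pow, norm_real, norm_eq_abs, abs_goldenConj_pow, inv_mul_eq_div]
  calc |√5 * ‖(Nat.fib n : ℂ) * a + Nat.fib (n + 1) * b‖ - φ ^ n * ‖a + φ * b‖|
      = |‖(φ : ℂ) ^ n * (a + φ * b) - (ψ : ℂ) ^ n * (a + ψ * b)‖ -
          ‖(φ : ℂ) ^ n * (a + φ * b)‖| := by
        rw [fib_mul_add_fib_succ_mul, norm_div, norm_real, norm_of_nonneg hs.le,
          mul_div_cancel₀ _ hs.ne', hφ]
    _ ≤ ‖(ψ : ℂ) ^ n * (a + ψ * b)‖ := by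
        simpa using abs_norm_sub_norm_le ((φ : ℂ) ^ n * (a + φ * b) - (ψ : ℂ) ^ n * (a + ψ * b))
          ((φ : ℂ) ^ n * (a + φ * b))
    _ = ‖a + ψ * b‖ / φ ^ n := hψ

theorem norm_ofReal_add_mul (a x y t : ℝ) :
    ‖(a : ℂ) + t * (x + y * I)‖ = √((a + t * x) ^ 2 + (t * y) ^ 2) := by
  rw [show (a : ℂ) + t * (x + y * I) = ((a + t * x : ℝ) : ℂ) + ((t * y : ℝ) : ℂ) * I by
    push_cast; ring, norm_add_mul_I]

theorem norm_fib_mul_add_fib_succ_mul_mem_Ioo (a b : ℂ) {n : ℕ} {lo hi ε : ℝ}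
    (hv : ‖a + ψ * b‖ ≤ ε * φ ^ (2 * n)) (hlo : lo * √5 + ε < ‖a + φ * b‖)
    (hhi : ‖a + φ * b‖ < hi * √5 - ε) :
    lo * φ ^ n < ‖(Nat.fib n : ℂ) * a + Nat.fib (n + 1) * b‖ ∧
      ‖(Nat.fib n : ℂ) * a + Nat.fib (n + 1) * b‖ < hi * φ ^ n := by
  have hs : 0 < √5 := Real.sqrt_pos.2 (by norm_num)
  have hP : 0 < φ ^ n := pow_pos goldenRatio_pos n
  have herr : ‖a + ψ * b‖ / φ ^ n ≤ ε * φ ^ n := by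
    rwa [div_le_iff₀ hP, mul_assoc, ← pow_add, ← two_mul]
  obtain ⟨h₁, h₂⟩ := abs_le.1 (abs_sqrt_five_mul_norm_fib_mul_add_fib_succ_mul_sub_le a b n)
  constructor
  · refine lt_of_mul_lt_mul_left ?_ hs.le
    nlinarith
  · refine lt_of_mul_lt_mul_left ?_ hs.le
    nlinarith

theorem sqrt_five_mem_Ioo : √5 ∈ Set.Ioo 2.23 2.24 :=
  ⟨(Real.lt_sqrt (by norm_num)).2 (by norm_num), (Real.sqrt_lt' (by norm_num)).2 (by norm_num)⟩

theorem goldenRatio_mem_Ioo : φ ∈ Set.Ioo 1.615 1.62 := by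
  obtain ⟨h₁, h₂⟩ := sqrt_five_mem_Ioo
  unfold goldenRatio
  constructor <;> linarith

theorem ten_le_goldenRatio_pow {n : ℕ} (hn : 5 ≤ n) : 10 ≤ φ ^ n :=
  calc (10 : ℝ) ≤ 1.615 ^ 5 := by norm_num
    _ ≤ φ ^ 5 := pow_le_pow_left₀ (by norm_num) goldenRatio_mem_Ioo.1.le 5
    _ ≤ φ ^ n := pow_le_pow_right₀ one_lt_goldenRatio.le hn

/-- Lemma 7.7, estimate for `ℓ(μ₀ⁿ)`: with `φ = (1+√5)/2`, `a = 2.383` and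
`b = 4.222 + 2.657 i` (the translations of `α₀, β₀` on the maximal cusp about `T₀`),
for every `n ≥ 5` one has `4.3 φⁿ < |fₙ a + fₙ₊₁ b| < 4.7 φⁿ`. -/
theorem fib_slope_length_T0 (n : ℕ) (hn : 5 ≤ n) :
    4.3 * ((1 + Real.sqrt 5) / 2) ^ n <
        ‖(Nat.fib n : ℂ) * (2.383 : ℂ) +
          (Nat.fib (n + 1) : ℂ) * ((4.222 : ℂ) + (2.657 : ℂ) * Complex.I)‖ ∧
      ‖(Nat.fib n : ℂ) * (2.383 : ℂ) +
          (Nat.fib (n + 1) : ℂ) * ((4.222 : ℂ) + (2.657 : ℂ) * Complex.I)‖ <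
        4.7 * ((1 + Real.sqrt 5) / 2) ^ n := by
  obtain ⟨hφ₁, hφ₂⟩ := goldenRatio_mem_Ioo
  have hcast : (2.383 : ℂ) = ((2.383 : ℝ) : ℂ) ∧ (4.222 : ℂ) = ((4.222 : ℝ) : ℂ) ∧
      (2.657 : ℂ) = ((2.657 : ℝ) : ℂ) := by norm_num
  rw [hcast.1, hcast.2.1, hcast.2.2]
  have hP : 10 ≤ φ ^ n := ten_le_goldenRatio_pow hn
  obtain ⟨hs₁, hs₂⟩ := sqrt_five_mem_Ioo
  apply norm_fib_mul_add_fib_succ_mul_mem_Ioo (ε := 0.02)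
  · rw [norm_ofReal_add_mul, Real.sqrt_le_left (by positivity), pow_mul', ← one_sub_goldenConj]
    calc (2.383 + (1 - φ) * 4.222) ^ 2 + ((1 - φ) * 2.657) ^ 2 ≤ (0.02 * 10 ^ 2) ^ 2 := by
          nlinarith
      _ ≤ (0.02 * (φ ^ n) ^ 2) ^ 2 := by gcongr
  · rw [norm_ofReal_add_mul, Real.lt_sqrt (by positivity)]
    nlinarith
  · rw [norm_ofReal_add_mul, Real.sqrt_lt' (by linarith)]
    nlinarith
end

section
/- Let φ = (1 + √5)/2, let a = 7.961 + 1.269·i ∈ ℂ and b = 4.989 ∈ ℂ. Then for every natural number n ≥ 5, 4.3·φⁿ < |f_{n−1}·a + f_n·b| < 4.7·φⁿ. (This is the estimate of Lemma 7.7 for the length ℓ(μ₁ⁿ) of the Fibonacci slope μ₁ⁿ = f_{n−1} α₁ + f_n β₁ on the maximal cusp about T₁.) -/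
/-!
By Binet's formula, `f (n-1) • a + f n • b = φⁿ • c - ψⁿ • d` with `c = (b - ψ a)/√5` and
`d = (b - φ a)/√5`; since `|ψ| = φ⁻¹`, the norm is within `‖d‖ / φⁿ` of `‖c‖ φⁿ`.
Here `‖c‖ ≈ 4.445` and `‖d‖ ≈ 3.65`, while `φⁿ > 10` for `n ≥ 5`, so the error term is negligible.
-/

open Real goldenRatio

section
variable {E : Type*} [SeminormedAddCommGroup E] [NormedSpace ℝ E]

theorem fib_smul_add_fib_succ_smul_eq (a b : E) (n : ℕ) :
    (Nat.fib n : ℝ) • a + (Nat.fib (n + 1) : ℝ) • b =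
      φ ^ (n + 1) • (√5)⁻¹ • (b - ψ • a) - ψ ^ (n + 1) • (√5)⁻¹ • (b - φ • a) := by
  rw [coe_fib_eq, coe_fib_eq]
  match_scalars
  · linear_combination (√5)⁻¹ * (φ ^ n - ψ ^ n) * goldenRatio_mul_goldenConj
  · ring

theorem abs_norm_fib_smul_add_fib_succ_smul_sub_le (a b : E) (n : ℕ) :
    |‖(Nat.fib n : ℝ) • a + (Nat.fib (n + 1) : ℝ) • b‖ - φ ^ (n + 1) * ‖(√5)⁻¹ • (b - ψ • a)‖|
      ≤ ‖(√5)⁻¹ • (b - φ • a)‖ / φ ^ (n + 1) := by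
  have hψ : ‖ψ‖ = φ⁻¹ := by rw [inv_goldenRatio, norm_of_nonpos goldenConj_neg.le]
  have hx : ‖φ ^ (n + 1) • (√5)⁻¹ • (b - ψ • a)‖ = φ ^ (n + 1) * ‖(√5)⁻¹ • (b - ψ • a)‖ := by
    rw [norm_smul, norm_of_nonneg (pow_pos goldenRatio_pos _).le]
  rw [fib_smul_add_fib_succ_smul_eq, ← hx]
  set x := φ ^ (n + 1) • (√5)⁻¹ • (b - ψ • a)
  set y := ψ ^ (n + 1) • (√5)⁻¹ • (b - φ • a)
  calc |‖x - y‖ - ‖x‖| ≤ ‖x - y - x‖ := abs_norm_sub_norm_le _ _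
    _ = ‖y‖ := by rw [sub_sub_cancel_left, norm_neg]
    _ = _ := by rw [norm_smul, norm_pow, hψ, inv_pow, div_eq_inv_mul]

end

theorem lt_mul_and_mul_lt_of_abs_sub_mul_le {x t c d l u : ℝ} (ht : 0 < t)
    (h : |x - t * c| ≤ d / t) (hl : d < (c - l) * t ^ 2) (hu : d < (u - c) * t ^ 2) :
    l * t < x ∧ x < u * t := by
  have hdt : d / t < (c - l) * t ∧ d / t < (u - c) * t := by
    constructor <;> rw [div_lt_iff₀ ht] <;> linarith
  constructor <;> linarith [abs_le.mp h]

theorem norm_inv_sqrt_five_smul_sub_smul (b x y r : ℝ) :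
    ‖(√5)⁻¹ • ((b : ℂ) - r • (x + y * Complex.I))‖ = √(((b - x * r) ^ 2 + (y * r) ^ 2) / 5) := by
  have h : (b : ℂ) - r • (x + y * Complex.I) =
      ((b - x * r : ℝ) : ℂ) + ((-(y * r) : ℝ) : ℂ) * Complex.I := by
    rw [Complex.real_smul]; push_cast; ring
  rw [norm_smul, h, Complex.norm_add_mul_I, norm_inv, norm_of_nonneg (sqrt_nonneg 5),
    sqrt_div' _ (by norm_num : (0:ℝ) ≤ 5), neg_sq, inv_mul_eq_div]

theorem goldenRatio_mem_Ioo_s9 : 1.618 < φ ∧ φ < 1.6181 := by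
  have h1 : 2.236 < √5 := by rw [lt_sqrt (by norm_num)]; norm_num
  have h2 : √5 < 2.2361 := by rw [sqrt_lt' (by norm_num)]; norm_num
  constructor <;> unfold goldenRatio <;> linarith

theorem ten_lt_goldenRatio_pow {n : ℕ} (hn : 5 ≤ n) : 10 < φ ^ n :=
  calc (10 : ℝ) < 1.618 ^ 5 := by norm_num
    _ < φ ^ 5 := by gcongr; exact goldenRatio_mem_Ioo_s9.1
    _ ≤ φ ^ n := pow_le_pow_right₀ one_lt_goldenRatio.le hn

/-- Lemma 7.7, estimate for `ℓ(μ₁ⁿ)`: with `φ = (1+√5)/2`, `a = 7.961 + 1.269 i` and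
`b = 4.989` (the translations of `α₁, β₁` on the maximal cusp about `T₁`),
for every `n ≥ 5` one has `4.3 φⁿ < |fₙ₋₁ a + fₙ b| < 4.7 φⁿ`. -/
theorem fib_slope_length_T1 (n : ℕ) (hn : 5 ≤ n) :
    4.3 * ((1 + Real.sqrt 5) / 2) ^ n <
        ‖(Nat.fib (n - 1) : ℂ) * ((7.961 : ℂ) + (1.269 : ℂ) * Complex.I) +
          (Nat.fib n : ℂ) * (4.989 : ℂ)‖ ∧
      ‖(Nat.fib (n - 1) : ℂ) * ((7.961 : ℂ) + (1.269 : ℂ) * Complex.I) +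
          (Nat.fib n : ℂ) * (4.989 : ℂ)‖ <
        4.7 * ((1 + Real.sqrt 5) / 2) ^ n := by
  obtain ⟨hφ₁, hφ₂⟩ := goldenRatio_mem_Ioo_s9
  have hψ := one_sub_goldenConj
  have hc : 4.4 < √(((4.989 - 7.961 * ψ) ^ 2 + (1.269 * ψ) ^ 2) / 5) ∧
      √(((4.989 - 7.961 * ψ) ^ 2 + (1.269 * ψ) ^ 2) / 5) < 4.5 := by
    rw [lt_sqrt (by norm_num), sqrt_lt' (by norm_num)]
    constructor <;> nlinarith
  have hd : √(((4.989 - 7.961 * φ) ^ 2 + (1.269 * φ) ^ 2) / 5) < 4 := by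
    rw [sqrt_lt' (by norm_num)]
    nlinarith
  have ht := ten_lt_goldenRatio_pow hn
  obtain ⟨m, rfl⟩ : ∃ m, n = m + 1 := ⟨n - 1, by omega⟩
  have key := abs_norm_fib_smul_add_fib_succ_smul_sub_le
    ((7.961 : ℝ) + (1.269 : ℝ) * Complex.I : ℂ) (4.989 : ℝ) m
  rw [norm_inv_sqrt_five_smul_sub_smul, norm_inv_sqrt_five_smul_sub_smul] at key
  push_cast [Complex.real_smul] at key
  rw [Nat.add_sub_cancel]
  exact lt_mul_and_mul_lt_of_abs_sub_mul_le (by positivity) key (by nlinarith) (by nlinarith)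
end

section
/- Let a = 2.383 ∈ ℂ and b = 4.222 + 2.657·i ∈ ℂ, and for a natural number m write μ^m = f_m·a + f_{m+1}·b ∈ ℂ. Then for every natural number n ≥ 5: (i) μ^{n−1} − μ^n = −μ^{n−2}; and (ii) for every integer k with k ≠ −1, |μ^{n−1} + k·μ^n| > |μ^{n−2}|. (This is the final claim of Lemma 7.7: every longitude of μ₀ⁿ has the form μ₀^{n−1} + k μ₀ⁿ, and the unique shortest longitude is λ₀ⁿ = μ₀^{n−2}, obtained at k = −1.) -/
/-!
Since `f_{m+2} = f_{m+1} + f_m`, the slopes satisfy `μ^{m+2} = μ^m + μ^{m+1}`, which gives (i).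
All `μ^m` lie in the closed first quadrant, and `μ^{m+1}` dominates `μ^m` in both coordinates,
strictly in the real part. Writing `p = μ^{n-2}`, `q = μ^{n-1}`, the longitude for `k ≥ 0` is
`q + k (p + q)`, which dominates `q`, and for `k = -1 - j` with `j ≥ 1` it is `-(p + j (p + q))`,
whose negative dominates `p`. Domination in the first quadrant, strict in the real part, is
strict domination in modulus.
-/

/-- The complex translation representing the Fibonacci slope
`μ^m = f_m α₀ + f_{m+1} β₀` on the maximal cusp torus about `T₀`,
where `α₀ : z ↦ z + 2.383` and `β₀ : z ↦ z + 4.222 + 2.657 i`. -/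
noncomputable def fibSlope (m : ℕ) : ℂ :=
  (Nat.fib m : ℂ) * (2.383 : ℂ) + (Nat.fib (m + 1) : ℂ) * ((4.222 : ℂ) + (2.657 : ℂ) * Complex.I)

namespace Complex

theorem norm_lt_norm_of_re_lt_of_im_le {z w : ℂ} (hz_re : 0 ≤ z.re) (hz_im : 0 ≤ z.im)
    (hre : z.re < w.re) (him : z.im ≤ w.im) : ‖z‖ < ‖w‖ := by
  rw [norm_def, norm_def, normSq_apply, normSq_apply]
  exact Real.sqrt_lt_sqrt (by positivity) (by nlinarith)

theorem norm_lt_norm_add_int_mul_add {p q : ℂ} (hp_re : 0 ≤ p.re) (hp_im : 0 ≤ p.im)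
    (hre : p.re < q.re) (him : p.im ≤ q.im) {k : ℤ} (hk : k ≠ -1) :
    ‖p‖ < ‖q + k * (p + q)‖ := by
  rcases le_or_gt 0 k with hk_nonneg | hk_neg
  · lift k to ℕ using hk_nonneg
    have hk_re : 0 ≤ (k : ℝ) * (p.re + q.re) := mul_nonneg k.cast_nonneg (by linarith)
    have hk_im : 0 ≤ (k : ℝ) * (p.im + q.im) := mul_nonneg k.cast_nonneg (by linarith)
    apply norm_lt_norm_of_re_lt_of_im_le hp_re hp_im <;> simp <;> linarith
  · obtain ⟨j, hj_pos, rfl⟩ : ∃ j : ℕ, 1 ≤ j ∧ k = -1 - j :=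
      ⟨(-1 - k).toNat, by omega, by omega⟩
    have hneg : q + ((-1 - j : ℤ) : ℂ) * (p + q) = -(p + j * (p + q)) := by push_cast; ring
    have hj : (1 : ℝ) ≤ j := by exact_mod_cast hj_pos
    rw [hneg, norm_neg]
    apply norm_lt_norm_of_re_lt_of_im_le hp_re hp_im <;> simp <;> nlinarith

end Complex

theorem fibSlope_add_two (m : ℕ) : fibSlope (m + 2) = fibSlope m + fibSlope (m + 1) := by
  simp only [fibSlope, Nat.fib_add_two, Nat.cast_add]
  ring

theorem fibSlope_re (m : ℕ) :
    (fibSlope m).re = (Nat.fib m : ℝ) * 2.383 + (Nat.fib (m + 1) : ℝ) * 4.222 := by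
  simp [fibSlope]

theorem fibSlope_im (m : ℕ) : (fibSlope m).im = (Nat.fib (m + 1) : ℝ) * 2.657 := by
  simp [fibSlope]

theorem fibSlope_re_nonneg (m : ℕ) : 0 ≤ (fibSlope m).re := by
  rw [fibSlope_re]; positivity

theorem fibSlope_im_nonneg (m : ℕ) : 0 ≤ (fibSlope m).im := by
  rw [fibSlope_im]; positivity

theorem fibSlope_re_lt_succ (m : ℕ) : (fibSlope m).re < (fibSlope (m + 1)).re := by
  have hfib : (1 : ℝ) ≤ Nat.fib (m + 1) := by exact_mod_cast Nat.fib_pos.mpr m.succ_pos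
  rw [fibSlope_re, fibSlope_re, Nat.fib_add_two, Nat.cast_add]
  linarith [(Nat.fib m).cast_nonneg (α := ℝ)]

theorem fibSlope_im_le_succ (m : ℕ) : (fibSlope m).im ≤ (fibSlope (m + 1)).im := by
  have hfib : (Nat.fib (m + 1) : ℝ) ≤ Nat.fib (m + 2) := by
    exact_mod_cast Nat.fib_mono (Nat.le_succ _)
  rw [fibSlope_im, fibSlope_im]
  linarith

/-- Final claim of Lemma 7.7: for `n ≥ 5`, (i) `μ^{n−1} − μ^n = −μ^{n−2}`, and
(ii) among the longitudes `μ^{n−1} + k μ^n` of `μ^n`, the unique shortest one is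
`μ^{n−2}`, obtained at `k = −1`: for every integer `k ≠ −1`,
`|μ^{n−1} + k μ^n| > |μ^{n−2}|`. -/
theorem fib_slope_shortest_longitude (n : ℕ) (hn : 5 ≤ n) :
    fibSlope (n - 1) - fibSlope n = -fibSlope (n - 2) ∧
    ∀ k : ℤ, k ≠ -1 →
      ‖fibSlope (n - 2)‖ < ‖fibSlope (n - 1) + (k : ℂ) * fibSlope n‖ := by
  obtain ⟨m, rfl⟩ : ∃ m, n = m + 2 := ⟨n - 2, by omega⟩
  rw [show m + 2 - 1 = m + 1 by omega, Nat.add_sub_cancel, fibSlope_add_two]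
  refine ⟨by ring, fun k hk => ?_⟩
  exact Complex.norm_lt_norm_add_int_mul_add (fibSlope_re_nonneg m) (fibSlope_im_nonneg m)
    (fibSlope_re_lt_succ m) (fibSlope_im_le_succ m) hk
end
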